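/- Let G be a strongly topological gyrogroup with symmetric neighborhood base 𝒰 at 0 and H a neutral admissible subgyrogroup generated from 𝒰. If B is a dense subset of the quotient space G/H and A ⊆ G satisfies π(A) = B, then for every neighborhood U of 0 in G, π(A ⊕ U) = G/H. -/
import Mathlib


open Filter Topology

class Gyrogroup (G : Type*) where
  add : G → G → G
  zero : G
  neg : G → G
  gyr : G → G → G → G
  zero_add : ∀ a, add zero a = a
  add_zero : ∀ a, add a zero = a
  zero_unique : ∀ z : G, (∀ a, add z a = a ∧ add a z = a) → z = zero
  neg_add : ∀ a, add (neg a) a = zero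
  add_neg : ∀ a, add a (neg a) = zero
  neg_unique : ∀ x y : G, add y x = zero → add x y = zero → y = neg x
  gyr_add : ∀ x y a b, gyr x y (add a b) = add (gyr x y a) (gyr x y b)
  gyr_bijective : ∀ x y, Function.Bijective (gyr x y)
  gyroassoc : ∀ x y z, add x (add y z) = add (add x y) (gyr x y z)
  loop : ∀ x y, gyr (add x y) y = gyr x y

namespace Gyrogroup

variable {G : Type*} [Gyrogroup G]

/-- Elementwise sum of two subsets: `A ⊕ B = {a ⊕ b : a ∈ A, b ∈ B}`. -/
def sAdd (A B : Set G) : Set G := Set.image2 add A B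

/-- Elementwise inverse of a subset: `⊖A = {⊖a : a ∈ A}`. -/
def sNeg (A : Set G) : Set G := neg '' A

/-- The left coset `x ⊕ H`. -/
def lcoset (x : G) (H : Set G) : Set G := (fun h => add x h) '' H

/-- The setoid identifying points with equal left cosets; `Quotient` of it is `G/H`. -/
def cosetSetoid (G : Type*) [Gyrogroup G] (H : Set G) : Setoid G :=
  ⟨fun x y => lcoset x H = lcoset y H,
    ⟨fun _ => rfl, fun h => h.symm, fun h1 h2 => h1.trans h2⟩⟩

end Gyrogroup

namespace Gyrogroup

variable {G : Type*} [Gyrogroup G]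

theorem aux_left_cancel {a x y : G} (h : add a x = add a y) : x = y := by
  have h1 : add (neg a) (add a x) = add (neg a) (add a y) := by rw [h]
  rw [gyroassoc, gyroassoc, neg_add, zero_add, zero_add] at h1
  exact (gyr_bijective (neg a) a).1 h1

theorem aux_gyr_zero_left (y z : G) : gyr (zero : G) y z = z := by
  have h := gyroassoc (zero : G) y z
  rw [zero_add, zero_add] at h
  exact aux_left_cancel h.symm

theorem aux_gyr_neg_self (a z : G) : gyr (neg a) a z = z := by
  have h := loop (neg a) a
  rw [neg_add] at h
  rw [← h, aux_gyr_zero_left]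

theorem aux_gyr_self_neg (a z : G) : gyr a (neg a) z = z := by
  have h := loop a (neg a)
  rw [add_neg] at h
  rw [← h, aux_gyr_zero_left]

theorem aux_neg_add_cancel (a b : G) : add (neg a) (add a b) = b := by
  rw [gyroassoc, neg_add, zero_add, aux_gyr_neg_self]

theorem aux_add_neg_cancel (a b : G) : add a (add (neg a) b) = b := by
  rw [gyroassoc, add_neg, zero_add, aux_gyr_self_neg]

theorem aux_add_gyr_neg (a b : G) : add (add a b) (gyr a b (neg b)) = a := by
  rw [← gyroassoc, add_neg, add_zero]

theorem aux_mem_lcoset_self {H : Set G} (h0 : zero ∈ H) (x : G) : x ∈ lcoset x H :=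
  ⟨zero, h0, add_zero x⟩

theorem aux_lcoset_eq_of_mem {H : Set G} (h0 : zero ∈ H)
    (hadd : ∀ a ∈ H, ∀ b ∈ H, add a b ∈ H)
    (hneg : ∀ a ∈ H, neg a ∈ H)
    (hgyrH : ∀ x y : G, gyr x y '' H = H)
    {x y : G} (hy : y ∈ lcoset x H) : lcoset x H = lcoset y H := by
  obtain ⟨h, hh, rfl⟩ := hy
  ext z
  constructor
  · rintro ⟨h', hh', rfl⟩
    refine ⟨gyr x h (add (neg h) h'), ?_, ?_⟩
    · rw [← hgyrH x h]
      exact Set.mem_image_of_mem _ (hadd _ (hneg _ hh) _ hh')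
    · show add (add x h) (gyr x h (add (neg h) h')) = add x h'
      rw [← gyroassoc, aux_add_neg_cancel]
  · rintro ⟨w, hw, rfl⟩
    have hw2 : w ∈ gyr x h '' H := by rw [hgyrH]; exact hw
    obtain ⟨w', hw', rfl⟩ := hw2
    exact ⟨add h w', hadd _ hh _ hw',
      show add x (add h w') = add (add x h) (gyr x h w') from gyroassoc x h w'⟩

end Gyrogroup


/-- A (Hausdorff) topological gyrogroup: `⊕` is jointly continuous and `⊖` is continuous. -/
class TopologicalGyrogroup (G : Type*) [TopologicalSpace G] extends Gyrogroup G where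
  t2 : T2Space G
  continuous_add : Continuous fun p : G × G => add p.1 p.2
  continuous_neg : Continuous neg

/-- If `B` is dense in `G/H` and `π(A) = B`, then `π(A ⊕ U) = G/H` for every
neighborhood `U` of `0` in `G`. -/
theorem quotient_dense_sAdd_eq_univ {G : Type*} [TopologicalSpace G]
    [TopologicalGyrogroup G]
(𝒰 : Set (Set G))
    (hbasis : (𝓝 (Gyrogroup.zero : G)).HasBasis (fun U : Set G => U ∈ 𝒰) id)
    (hsym : ∀ U ∈ 𝒰, Gyrogroup.sNeg U = U)
    (hgyr : ∀ U ∈ 𝒰, ∀ x y : G, Gyrogroup.gyr x y '' U = U)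
    (Useq : ℕ → Set G) (hmem : ∀ n, Useq n ∈ 𝒰) (hopen : ∀ n, IsOpen (Useq n))
    (hchain : ∀ n : ℕ, Gyrogroup.sAdd (Useq (n + 1))
      (Gyrogroup.sAdd (Useq (n + 1)) (Useq (n + 1))) ⊆ Useq n)
    (H : Set G) (hH : H = ⋂ n, Useq n)
    (hneutral : ∀ U : Set G, IsOpen U → Gyrogroup.zero ∈ U →
      ∃ V : Set G, IsOpen V ∧ Gyrogroup.zero ∈ V ∧
        Gyrogroup.sAdd H V ⊆ Gyrogroup.sAdd U H)
    (B : Set (Quotient (Gyrogroup.cosetSetoid G H))) (hBdense : Dense B)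
    (A : Set G) (hA : Quotient.mk (Gyrogroup.cosetSetoid G H) '' A = B) :
    ∀ U ∈ 𝓝 (Gyrogroup.zero : G),
      Quotient.mk (Gyrogroup.cosetSetoid G H) '' (Gyrogroup.sAdd A U) = Set.univ := by
  intro U hU
  -- Basic facts about H
  have hUn0 : ∀ n, (Gyrogroup.zero : G) ∈ Useq n := fun n =>
    mem_of_mem_nhds (hbasis.mem_of_mem (hmem n))
  have h0H : (Gyrogroup.zero : G) ∈ H := by
    rw [hH]; exact Set.mem_iInter.2 hUn0
  have hnegH : ∀ a ∈ H, Gyrogroup.neg a ∈ H := by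
    intro a ha
    rw [hH] at ha ⊢
    refine Set.mem_iInter.2 fun n => ?_
    have h2 : Gyrogroup.neg a ∈ Gyrogroup.sNeg (Useq n) :=
      Set.mem_image_of_mem _ (Set.mem_iInter.1 ha n)
    rwa [hsym _ (hmem n)] at h2
  have haddH : ∀ a ∈ H, ∀ b ∈ H, Gyrogroup.add a b ∈ H := by
    intro a ha b hb
    rw [hH] at ha hb ⊢
    refine Set.mem_iInter.2 fun n => ?_
    refine hchain n (Set.mem_image2_of_mem (Set.mem_iInter.1 ha (n+1)) ?_)
    exact Gyrogroup.add_zero b ▸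
      Set.mem_image2_of_mem (Set.mem_iInter.1 hb (n+1)) (hUn0 (n+1))
  have hgyrH : ∀ x y : G, Gyrogroup.gyr x y '' H = H := by
    intro x y
    rw [hH, Set.image_iInter (Gyrogroup.gyr_bijective x y) Useq]
    exact Set.iInter_congr fun n => hgyr _ (hmem n) x y
  have key : ∀ {x y : G}, y ∈ Gyrogroup.lcoset x H →
      Gyrogroup.lcoset x H = Gyrogroup.lcoset y H :=
    fun hy => Gyrogroup.aux_lcoset_eq_of_mem h0H haddH hnegH hgyrH hy
  -- continuity of translations
  have hcontL : ∀ g : G, Continuous fun y : G => Gyrogroup.add g y := fun g =>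
    TopologicalGyrogroup.continuous_add.comp (continuous_const.prodMk continuous_id)
  have hcontR : ∀ g : G, Continuous fun y : G => Gyrogroup.add y g := fun g =>
    TopologicalGyrogroup.continuous_add.comp (continuous_id.prodMk continuous_const)
  -- the target set
  ext q
  simp only [Set.mem_univ, iff_true]
  obtain ⟨x, rfl⟩ := Quotient.exists_rep q
  -- neutrality applied to the interior of U
  obtain ⟨W, hWopen, hW0, hWsub⟩ := hneutral (interior U) isOpen_interior
    (mem_interior_iff_mem_nhds.2 hU)
  obtain ⟨W', hW'mem, hW'sub⟩ := hbasis.mem_iff.1 (hWopen.mem_nhds hW0)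
  have hW'nhds : W' ∈ 𝓝 (Gyrogroup.zero : G) := hbasis.mem_of_mem hW'mem
  set Wo := interior W' with hWo
  have h0Wo : (Gyrogroup.zero : G) ∈ Wo := mem_interior_iff_mem_nhds.2 hW'nhds
  set O : Set G := (fun w => Gyrogroup.add x w) '' Wo with hO
  have hOopen : IsOpen O := by
    have hOeq : O = (fun y => Gyrogroup.add (Gyrogroup.neg x) y) ⁻¹' Wo := by
      ext y
      simp only [hO, Set.mem_image, Set.mem_preimage]
      constructor
      · rintro ⟨w, hw, rfl⟩
        rwa [Gyrogroup.aux_neg_add_cancel]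
      · intro hy
        exact ⟨_, hy, Gyrogroup.aux_add_neg_cancel x y⟩
    rw [hOeq]
    exact isOpen_interior.preimage (hcontL _)
  set T : Set (Quotient (Gyrogroup.cosetSetoid G H)) :=
    Quotient.mk (Gyrogroup.cosetSetoid G H) '' O with hT
  have hpre : Quotient.mk (Gyrogroup.cosetSetoid G H) ⁻¹' T =
      ⋃ h ∈ H, (fun y => Gyrogroup.add y h) ⁻¹' O := by
    ext y
    simp only [hT, Set.mem_preimage, Set.mem_image, Set.mem_iUnion]
    constructor
    · rintro ⟨o, hoO, ho⟩
      have heq : Gyrogroup.lcoset o H = Gyrogroup.lcoset y H := Quotient.exact ho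
      have : o ∈ Gyrogroup.lcoset y H := heq ▸ Gyrogroup.aux_mem_lcoset_self h0H o
      obtain ⟨h, hh, rfl⟩ := this
      exact ⟨h, hh, hoO⟩
    · rintro ⟨h, hh, hyh⟩
      refine ⟨Gyrogroup.add y h, hyh, ?_⟩
      exact Quot.sound (key ⟨h, hh, rfl⟩).symm
  have hTopen : IsOpen T := by
    rw [isOpen_coinduced (f := Quotient.mk (Gyrogroup.cosetSetoid G H)), hpre]
    exact isOpen_biUnion fun h _ => hOopen.preimage (hcontR h)
  have hxT : (Quotient.mk (Gyrogroup.cosetSetoid G H) x) ∈ T :=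
    ⟨Gyrogroup.add x Gyrogroup.zero, ⟨Gyrogroup.zero, h0Wo, rfl⟩,
      by rw [Gyrogroup.add_zero]⟩
  -- density
  obtain ⟨q, hqT, hqB⟩ := mem_closure_iff.1 (hBdense _) T hTopen hxT
  rw [← hA] at hqB
  obtain ⟨a, haA, rfl⟩ := hqB
  obtain ⟨o, ⟨w, hwWo, rfl⟩, hqo⟩ := hqT
  -- a and x ⊕ w are in the same coset
  have heq : Gyrogroup.lcoset (Gyrogroup.add x w) H = Gyrogroup.lcoset a H :=
    Quotient.exact hqo
  have hmemx : Gyrogroup.add x w ∈ Gyrogroup.lcoset a H :=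
    heq ▸ Gyrogroup.aux_mem_lcoset_self h0H _
  obtain ⟨h₁, hh₁, hxw⟩ := hmemx
  -- x = (a ⊕ h₁) ⊕ w₁ with w₁ ∈ W'
  have hwW' : w ∈ W' := interior_subset hwWo
  have hnegw : Gyrogroup.neg w ∈ W' := by
    have : Gyrogroup.neg w ∈ Gyrogroup.sNeg W' := Set.mem_image_of_mem _ hwW'
    rwa [hsym _ hW'mem] at this
  set w₁ := Gyrogroup.gyr x w (Gyrogroup.neg w) with hw₁def
  have hw₁ : w₁ ∈ W' := by
    have : w₁ ∈ Gyrogroup.gyr x w '' W' := Set.mem_image_of_mem _ hnegw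
    rwa [hgyr _ hW'mem] at this
  have hxw' : Gyrogroup.add a h₁ = Gyrogroup.add x w := hxw
  have hx1 : x = Gyrogroup.add (Gyrogroup.add a h₁) w₁ := by
    calc x = Gyrogroup.add (Gyrogroup.add x w) w₁ := (Gyrogroup.aux_add_gyr_neg x w).symm
    _ = Gyrogroup.add (Gyrogroup.add a h₁) w₁ := by rw [hxw']
  -- pull w₁ past h₁ using a gyration
  have : w₁ ∈ Gyrogroup.gyr a h₁ '' W' := by rw [hgyr _ hW'mem]; exact hw₁
  obtain ⟨w₂, hw₂, hgw⟩ := this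
  have hx2 : x = Gyrogroup.add a (Gyrogroup.add h₁ w₂) := by
    rw [Gyrogroup.gyroassoc, hgw, ← hx1]
  -- h₁ ⊕ w₂ ∈ H ⊕ W' ⊆ H ⊕ W ⊆ (interior U) ⊕ H
  have hmem2 : Gyrogroup.add h₁ w₂ ∈ Gyrogroup.sAdd (interior U) H :=
    hWsub (Set.mem_image2_of_mem hh₁ (hW'sub hw₂))
  obtain ⟨u, huU, h₂, hh₂, huh⟩ := hmem2
  have hx3 : x = Gyrogroup.add (Gyrogroup.add a u) (Gyrogroup.gyr a u h₂) := by
    rw [← Gyrogroup.gyroassoc, huh, ← hx2]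
  have hh₃ : Gyrogroup.gyr a u h₂ ∈ H := by
    have : Gyrogroup.gyr a u h₂ ∈ Gyrogroup.gyr a u '' H := Set.mem_image_of_mem _ hh₂
    rwa [hgyrH] at this
  refine ⟨Gyrogroup.add a u, Set.mem_image2_of_mem haA (interior_subset huU), ?_⟩
  exact Quot.sound (key ⟨_, hh₃, hx3.symm⟩)
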